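/- arXiv:2206.12726 — 2 statements merged into one kernel-verified Lean document; each statement's English description precedes it below -/
import Mathlib

section
/- The operator S restricts to a bijection of the set of 1-Lipschitz functions ℤₚ → O_{ℂₚ}, where O_{ℂₚ} = {x ∈ ℂₚ : |x| ≤ 1}: f is 1-Lipschitz into O_{ℂₚ} if and only if S(f) is. -/
open Filter Finset

set_option maxHeartbeats 1000000
set_option linter.unusedSectionVars false

/-- The canonical embedding `ℤ_[p] → K` (where `K` plays the role of `ℂ_p`,
a complete nontrivially normed field extension of `ℚ_[p]`). -/
noncomputable def pc (p : ℕ) [Fact p.Prime] (K : Type*) [NontriviallyNormedField K]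
    [NormedAlgebra ℚ_[p] K] (x : ℤ_[p]) : K :=
  algebraMap ℚ_[p] K x

/-- The operator `S` : `S(f)(x) = f(x) - x·f(x-1)`. -/
noncomputable def Sop (p : ℕ) [Fact p.Prime] (K : Type*) [NontriviallyNormedField K]
    [NormedAlgebra ℚ_[p] K] (f : ℤ_[p] → K) : ℤ_[p] → K :=
  fun x => f x - pc p K x * f (x - 1)

/-- The Mahler basis function `βₙ(x) = C(x,n) = x(x-1)⋯(x-n+1)/n!`, valued in `K`. -/
noncomputable def bK (p : ℕ) [Fact p.Prime] (K : Type*) [NontriviallyNormedField K]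
    [NormedAlgebra ℚ_[p] K] (n : ℕ) (x : ℤ_[p]) : K :=
  (∏ i ∈ Finset.range n, (pc p K x - (i : K))) / (n.factorial : K)

/-! ### Auxiliary material -/

/-- Nonarchimedean bound for a difference. -/
lemma norm_sub_le_max' {R : Type*} [SeminormedAddCommGroup R] [IsUltrametricDist R]
    (a b : R) : ‖a - b‖ ≤ max ‖a‖ ‖b‖ := by
  simpa [sub_eq_add_neg, norm_neg] using IsUltrametricDist.norm_add_le_max a (-b)

/-- Nonarchimedean bound for a difference of products. -/
lemma mul_sub_mul_norm_le {R : Type*} [NormedRing R] [IsUltrametricDist R]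
    {a a' b b' : R} (ha : ‖a‖ ≤ 1) (hb' : ‖b'‖ ≤ 1) {c : ℝ}
    (h1 : ‖a - a'‖ ≤ c) (h2 : ‖b - b'‖ ≤ c) : ‖a * b - a' * b'‖ ≤ c := by
  have hc : (0 : ℝ) ≤ c := le_trans (norm_nonneg _) h1
  have h : a * b - a' * b' = a * (b - b') + (a - a') * b' := by
    rw [mul_sub, sub_mul]; abel
  rw [h]
  refine (IsUltrametricDist.norm_add_le_max _ _).trans (max_le ?_ ?_)
  · calc ‖a * (b - b')‖ ≤ ‖a‖ * ‖b - b'‖ := norm_mul_le _ _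
      _ ≤ 1 * c := mul_le_mul ha h2 (norm_nonneg _) zero_le_one
      _ = c := one_mul c
  · calc ‖(a - a') * b'‖ ≤ ‖a - a'‖ * ‖b'‖ := norm_mul_le _ _
      _ ≤ c * 1 := mul_le_mul h1 hb' (norm_nonneg _) hc
      _ = c := mul_one c

/-- A normed field extension of `ℚ_[p]` is nonarchimedean. -/
lemma isUltra (p : ℕ) [Fact p.Prime] {K : Type*} [NontriviallyNormedField K]
    [NormedAlgebra ℚ_[p] K] : IsUltrametricDist K := by
  refine IsUltrametricDist.isUltrametricDist_of_forall_norm_natCast_le_one fun n => ?_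
  have h : ((n : K)) = algebraMap ℚ_[p] K (n : ℚ_[p]) := by rw [map_natCast]
  rw [h, norm_algebraMap']
  exact_mod_cast Padic.norm_int_le_one (n : ℤ)

section Aux

variable {p : ℕ} [Fact p.Prime]

/-- The falling factorial `(x)ₙ = x(x-1)⋯(x-n+1)` inside `ℤ_[p]`. -/
noncomputable def Zff (p : ℕ) [Fact p.Prime] (n : ℕ) (x : ℤ_[p]) : ℤ_[p] :=
  ∏ i ∈ Finset.range n, (x - (i : ℤ_[p]))

lemma Zff_zero (x : ℤ_[p]) : Zff p 0 x = 1 := by simp [Zff]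

lemma Zff_succ (n : ℕ) (x : ℤ_[p]) : Zff p (n + 1) x = Zff p n x * (x - n) := by
  rw [Zff, Finset.prod_range_succ, ← Zff]

lemma Zff_succ' (n : ℕ) (x : ℤ_[p]) : Zff p (n + 1) x = x * Zff p n (x - 1) := by
  rw [Zff, Finset.prod_range_succ']
  simp only [Nat.cast_zero, sub_zero]
  rw [mul_comm, Zff]
  congr 1
  refine Finset.prod_congr rfl fun i _ => ?_
  push_cast
  ring

lemma Zff_eq_desc (n : ℕ) (x : ℤ_[p]) : Zff p n x = (descPochhammer ℤ_[p] n).eval x := by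
  induction n with
  | zero => simp [Zff]
  | succ n ih => rw [Zff_succ, ih, descPochhammer_succ_eval]

lemma norm_Zff_le (n : ℕ) (x : ℤ_[p]) : ‖Zff p n x‖ ≤ ‖((n.factorial : ℤ_[p]))‖ := by
  rw [Zff_eq_desc, descPochhammer_eval_eq_ascPochhammer]
  exact PadicInt.norm_ascPochhammer_le n _

lemma Zff_lip (n : ℕ) (x y : ℤ_[p]) : ‖Zff p n x - Zff p n y‖ ≤ ‖x - y‖ := by
  induction n with
  | zero => simp [Zff]
  | succ n ih =>
    rw [Zff_succ, Zff_succ]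
    refine mul_sub_mul_norm_le (PadicInt.norm_le_one _) (PadicInt.norm_le_one _) ih ?_
    have h : x - (n : ℤ_[p]) - (y - n) = x - y := by ring
    rw [h]

lemma tendsto_div_nat (hp : 0 < p) : Tendsto (fun n : ℕ => n / p) atTop atTop := by
  refine Filter.tendsto_atTop_atTop.mpr fun b => ⟨b * p, fun n hn => ?_⟩
  rwa [Nat.le_div_iff_mul_le hp]

lemma pow_div_dvd_factorial (n : ℕ) : (p : ℕ) ^ (n / p) ∣ n.factorial := by
  rcases Nat.eq_zero_or_pos (n / p) with h | h
  · simp [h]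
  · have hp := (Fact.out : p.Prime)
    have hpn : p ≤ n := by
      by_contra hc
      push_neg at hc
      rw [Nat.div_eq_of_lt hc] at h
      exact absurd h (lt_irrefl 0)
    have hlog : 1 ≤ Nat.log p n := Nat.log_pos hp.one_lt hpn
    rw [Nat.Prime.pow_dvd_factorial_iff hp (Nat.lt_succ_self _)]
    have h1 : (1 : ℕ) ∈ Finset.Ico 1 (Nat.log p n + 1) := by
      simp only [Finset.mem_Ico]
      omega
    calc n / p = n / p ^ 1 := by rw [pow_one]
      _ ≤ ∑ i ∈ Finset.Ico 1 (Nat.log p n + 1), n / p ^ i :=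
        Finset.single_le_sum (f := fun i => n / p ^ i) (fun i _ => Nat.zero_le _) h1

lemma norm_factorial_le (n : ℕ) :
    ‖((n.factorial : ℤ_[p]))‖ ≤ (p : ℝ) ^ (-(n / p : ℕ) : ℤ) := by
  have h : ((n.factorial : ℤ_[p])) = ((n.factorial : ℤ) : ℤ_[p]) := by push_cast; ring
  rw [h, PadicInt.norm_int_le_pow_iff_dvd]
  exact_mod_cast pow_div_dvd_factorial n

lemma tendsto_norm_factorial :
    Tendsto (fun n : ℕ => ‖((n.factorial : ℤ_[p]))‖) atTop (nhds 0) := by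
  have hp := (Fact.out : p.Prime)
  have hp1 : (1 : ℝ) < (p : ℝ) := by exact_mod_cast hp.one_lt
  have hlim : Tendsto (fun k : ℕ => ((p : ℝ)⁻¹) ^ k) atTop (nhds 0) :=
    tendsto_pow_atTop_nhds_zero_of_lt_one (by positivity) (by
      rw [inv_lt_one_iff₀]; right; exact hp1)
  have hcomp : Tendsto (fun n : ℕ => ((p : ℝ)⁻¹) ^ (n / p)) atTop (nhds 0) :=
    hlim.comp (tendsto_div_nat hp.pos)
  refine squeeze_zero (fun n => norm_nonneg _) (fun n => ?_) hcomp
  calc ‖((n.factorial : ℤ_[p]))‖ ≤ (p : ℝ) ^ (-(n / p : ℕ) : ℤ) := norm_factorial_le n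
    _ = ((p : ℝ)⁻¹) ^ (n / p) := by
      rw [zpow_neg, zpow_natCast, inv_pow]

variable {K : Type*} [NontriviallyNormedField K] [NormedAlgebra ℚ_[p] K]

lemma pc_eq (x : ℤ_[p]) : pc p K x = ((algebraMap ℚ_[p] K).comp (PadicInt.Coe.ringHom)) x := rfl

lemma norm_pc (x : ℤ_[p]) : ‖pc p K x‖ = ‖x‖ := by
  rw [pc, norm_algebraMap', PadicInt.norm_def]

lemma lip_ineq {g : ℤ_[p] → K} (hg : LipschitzWith 1 g) (a b : ℤ_[p]) :
    ‖g a - g b‖ ≤ ‖a - b‖ := by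
  have h := hg.dist_le_mul a b
  rwa [NNReal.coe_one, one_mul, dist_eq_norm, dist_eq_norm] at h

/-- The falling factorial in `K`. -/
noncomputable def ffK (n : ℕ) (x : ℤ_[p]) : K :=
  pc p K (Zff p n x)

lemma ffK_zero (x : ℤ_[p]) : (ffK 0 x : K) = 1 := by
  rw [ffK, Zff_zero, pc_eq, map_one]

lemma ffK_succ' (n : ℕ) (x : ℤ_[p]) :
    (ffK (n + 1) x : K) = pc p K x * ffK n (x - 1) := by
  rw [ffK, Zff_succ', pc_eq, map_mul]
  rfl

lemma norm_ffK_le (n : ℕ) (x : ℤ_[p]) : ‖(ffK n x : K)‖ ≤ ‖((n.factorial : ℤ_[p]))‖ := by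
  rw [ffK, norm_pc]
  exact norm_Zff_le n x

lemma norm_ffK_le_one (n : ℕ) (x : ℤ_[p]) : ‖(ffK n x : K)‖ ≤ 1 :=
  (norm_ffK_le n x).trans (PadicInt.norm_le_one _)

lemma ffK_lip (n : ℕ) (x y : ℤ_[p]) : ‖(ffK n x : K) - ffK n y‖ ≤ ‖x - y‖ := by
  rw [ffK, ffK, pc_eq, pc_eq, ← map_sub, ← pc_eq, norm_pc]
  exact Zff_lip n x y

section Series

variable [CompleteSpace K]

/-- The inverse operator: `S⁻¹ g (x) = ∑ₙ (x)ₙ g(x - n)`. -/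
noncomputable def Tinv (g : ℤ_[p] → K) (x : ℤ_[p]) : K :=
  ∑' n : ℕ, (ffK n x : K) * g (x - (n : ℤ_[p]))

lemma summable_term (g : ℤ_[p] → K) (hg : ∀ x, ‖g x‖ ≤ 1) (x : ℤ_[p]) :
    Summable (fun n : ℕ => (ffK n x : K) * g (x - (n : ℤ_[p]))) := by
  haveI : IsUltrametricDist K := isUltra p
  refine NonarchimedeanAddGroup.summable_of_tendsto_cofinite_zero ?_
  rw [Nat.cofinite_eq_atTop]
  refine squeeze_zero_norm (fun n => ?_) (tendsto_norm_factorial (p := p))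
  calc ‖(ffK n x : K) * g (x - (n : ℤ_[p]))‖ ≤ ‖(ffK n x : K)‖ * ‖g (x - (n : ℤ_[p]))‖ :=
      norm_mul_le _ _
    _ ≤ ‖((n.factorial : ℤ_[p]))‖ * 1 :=
      mul_le_mul (norm_ffK_le n x) (hg _) (norm_nonneg _) (norm_nonneg _)
    _ = ‖((n.factorial : ℤ_[p]))‖ := mul_one _

lemma norm_Tinv_le (g : ℤ_[p] → K) (hg : ∀ x, ‖g x‖ ≤ 1) (x : ℤ_[p]) :
    ‖(Tinv g x : K)‖ ≤ 1 := by
  haveI : IsUltrametricDist K := isUltra p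
  refine IsUltrametricDist.norm_tsum_le_of_forall_le_of_nonneg zero_le_one fun n => ?_
  calc ‖(ffK n x : K) * g (x - (n : ℤ_[p]))‖ ≤ ‖(ffK n x : K)‖ * ‖g (x - (n : ℤ_[p]))‖ :=
      norm_mul_le _ _
    _ ≤ 1 * 1 := mul_le_mul (norm_ffK_le_one n x) (hg _) (norm_nonneg _) zero_le_one
    _ = 1 := mul_one 1

lemma Tinv_lip (g : ℤ_[p] → K) (hg1 : LipschitzWith 1 g) (hg : ∀ x, ‖g x‖ ≤ 1)
    (x y : ℤ_[p]) : ‖(Tinv g x : K) - Tinv g y‖ ≤ ‖x - y‖ := by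
  haveI : IsUltrametricDist K := isUltra p
  rw [Tinv, Tinv,
    ← ((summable_term g hg x).hasSum.sub (summable_term g hg y).hasSum).tsum_eq]
  refine IsUltrametricDist.norm_tsum_le_of_forall_le_of_nonneg (norm_nonneg _) fun n => ?_
  refine mul_sub_mul_norm_le (norm_ffK_le_one n x) (hg _) (ffK_lip n x y) ?_
  calc ‖g (x - (n : ℤ_[p])) - g (y - (n : ℤ_[p]))‖
      ≤ ‖(x - (n : ℤ_[p])) - (y - (n : ℤ_[p]))‖ := lip_ineq hg1 _ _
    _ = ‖x - y‖ := by
      congr 1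
      ring

lemma Sop_Tinv (g : ℤ_[p] → K) (hg : ∀ x, ‖g x‖ ≤ 1) : Sop p K (Tinv g) = g := by
  haveI : IsUltrametricDist K := isUltra p
  funext x
  have hsum := summable_term g hg x
  have h1 : pc p K x * Tinv g (x - 1)
      = ∑' n : ℕ, (ffK (n + 1) x : K) * g (x - (((n + 1) : ℕ) : ℤ_[p])) := by
    rw [Tinv, ← tsum_mul_left]
    congr 1
    funext n
    have harg : x - 1 - (n : ℤ_[p]) = x - (((n + 1) : ℕ) : ℤ_[p]) := by push_cast; ring
    rw [ffK_succ', mul_assoc, harg]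
  have h2 : Tinv g x = (ffK 0 x : K) * g (x - ((0 : ℕ) : ℤ_[p]))
      + ∑' n : ℕ, (ffK (n + 1) x : K) * g (x - (((n + 1) : ℕ) : ℤ_[p])) := by
    rw [Tinv]
    exact Summable.tsum_eq_zero_add hsum
  simp only [Sop]
  rw [h1, h2, ffK_zero, Nat.cast_zero, sub_zero, one_mul, add_sub_cancel_right]

end Series

lemma Sop_inj [CompleteSpace K] (f F : ℤ_[p] → K) (C : ℝ) (hb : ∀ x, ‖f x - F x‖ ≤ C)
    (h : Sop p K f = Sop p K F) : f = F := by
  have hrec : ∀ x, f x - F x = pc p K x * (f (x - 1) - F (x - 1)) := by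
    intro x
    have hx := congrFun h x
    simp only [Sop] at hx
    rw [mul_sub]
    exact sub_eq_sub_iff_sub_eq_sub.mp hx
  have key : ∀ (n : ℕ) (x : ℤ_[p]),
      f x - F x = (ffK n x : K) * (f (x - (n : ℤ_[p])) - F (x - (n : ℤ_[p]))) := by
    intro n
    induction n with
    | zero => intro x; rw [ffK_zero, Nat.cast_zero, sub_zero, one_mul]
    | succ n ih =>
      intro x
      have harg : x - 1 - (n : ℤ_[p]) = x - (((n + 1) : ℕ) : ℤ_[p]) := by push_cast; ring
      rw [hrec x, ih (x - 1), ffK_succ', mul_assoc, harg]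
  funext x
  have hux : ∀ n : ℕ, ‖f x - F x‖ ≤ ‖((n.factorial : ℤ_[p]))‖ * C := by
    intro n
    rw [key n x]
    calc ‖(ffK n x : K) * (f (x - (n : ℤ_[p])) - F (x - (n : ℤ_[p])))‖
        ≤ ‖(ffK n x : K)‖ * ‖f (x - (n : ℤ_[p])) - F (x - (n : ℤ_[p]))‖ := norm_mul_le _ _
      _ ≤ ‖((n.factorial : ℤ_[p]))‖ * C :=
        mul_le_mul (norm_ffK_le n x) (hb _) (norm_nonneg _) (norm_nonneg _)
  have hlim : Tendsto (fun n : ℕ => ‖((n.factorial : ℤ_[p]))‖ * C) atTop (nhds 0) := by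
    have h' := (tendsto_norm_factorial (p := p)).mul_const C
    rwa [zero_mul] at h'
  have h0 : ‖f x - F x‖ ≤ 0 := ge_of_tendsto' hlim hux
  have h1 : f x - F x = 0 := norm_le_zero_iff.mp h0
  exact sub_eq_zero.mp h1

end Aux

/-- `S` restricts to a bijection of the set of `1`-Lipschitz
functions `ℤ_[p] → O_K` (`O_K = {x : ‖x‖ ≤ 1}`): a continuous `f` is
`1`-Lipschitz with values in the closed unit ball if and only if `S f` is. -/
theorem stmt_11 (p : ℕ) [Fact p.Prime] (K : Type*) [NontriviallyNormedField K]
    [NormedAlgebra ℚ_[p] K] [CompleteSpace K]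
    (f : ℤ_[p] → K) (hf : Continuous f) :
    (LipschitzWith 1 f ∧ ∀ x, ‖f x‖ ≤ 1) ↔
      (LipschitzWith 1 (Sop p K f) ∧ ∀ x, ‖Sop p K f x‖ ≤ 1) := by
  haveI : IsUltrametricDist K := isUltra p
  have lip_iff : ∀ (g : ℤ_[p] → K), LipschitzWith 1 g ↔ ∀ x y, ‖g x - g y‖ ≤ ‖x - y‖ := by
    intro g
    constructor
    · intro hg x y
      exact lip_ineq hg x y
    · intro hg
      refine LipschitzWith.of_dist_le_mul fun x y => ?_
      rw [NNReal.coe_one, one_mul, dist_eq_norm, dist_eq_norm]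
      exact hg x y
  constructor
  · rintro ⟨h1, h2⟩
    rw [lip_iff] at h1
    constructor
    · rw [lip_iff]
      intro x y
      have key : Sop p K f x - Sop p K f y
          = (f x - f y) - (pc p K x * (f (x - 1) - f (y - 1)) + (pc p K x - pc p K y) * f (y - 1)) := by
        simp only [Sop]; ring
      rw [key]
      refine (norm_sub_le_max' _ _).trans (max_le (h1 x y) ?_)
      refine (IsUltrametricDist.norm_add_le_max _ _).trans (max_le ?_ ?_)
      · calc ‖pc p K x * (f (x - 1) - f (y - 1))‖ ≤ ‖pc p K x‖ * ‖f (x - 1) - f (y - 1)‖ :=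
            norm_mul_le _ _
          _ ≤ 1 * ‖x - y‖ := by
            refine mul_le_mul ?_ ?_ (norm_nonneg _) zero_le_one
            · rw [norm_pc]; exact PadicInt.norm_le_one _
            · have h := h1 (x - 1) (y - 1)
              have harg : x - 1 - (y - 1) = x - y := by ring
              rwa [harg] at h
          _ = ‖x - y‖ := one_mul _
      · calc ‖(pc p K x - pc p K y) * f (y - 1)‖ ≤ ‖pc p K x - pc p K y‖ * ‖f (y - 1)‖ :=
            norm_mul_le _ _
          _ ≤ ‖x - y‖ * 1 := by
            refine mul_le_mul ?_ (h2 _) (norm_nonneg _) (norm_nonneg _)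
            rw [pc_eq, pc_eq, ← map_sub, ← pc_eq, norm_pc]
          _ = ‖x - y‖ := mul_one _
    · intro x
      rw [Sop]
      refine (norm_sub_le_max' _ _).trans (max_le (h2 x) ?_)
      calc ‖pc p K x * f (x - 1)‖ ≤ ‖pc p K x‖ * ‖f (x - 1)‖ := norm_mul_le _ _
        _ ≤ 1 * 1 := by
          refine mul_le_mul ?_ (h2 _) (norm_nonneg _) zero_le_one
          rw [norm_pc]; exact PadicInt.norm_le_one _
        _ = 1 := mul_one 1
  · rintro ⟨h1, h2⟩
    have hSF : Sop p K (Tinv (Sop p K f)) = Sop p K f := Sop_Tinv (Sop p K f) h2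
    set g : ℤ_[p] → K := Sop p K f with hg
    set F : ℤ_[p] → K := Tinv g with hF
    -- f is bounded by compactness
    obtain ⟨C, hC⟩ : ∃ C : ℝ, ∀ x, ‖f x‖ ≤ C := by
      obtain ⟨x₀, -, hx₀⟩ := isCompact_univ.exists_isMaxOn ⟨0, trivial⟩ hf.norm.continuousOn
      exact ⟨‖f x₀‖, fun x => hx₀ (Set.mem_univ x)⟩
    have hFle : ∀ x, ‖F x‖ ≤ 1 := fun x => norm_Tinv_le g h2 x
    have hfF : f = F := by
      refine Sop_inj f F (C + 1) (fun x => ?_) (by rw [hSF])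
      calc ‖f x - F x‖ ≤ ‖f x‖ + ‖F x‖ := norm_sub_le _ _
        _ ≤ C + 1 := add_le_add (hC x) (hFle x)
    constructor
    · rw [hfF, lip_iff]
      exact Tinv_lip g h1 h2
    · intro x
      rw [hfF]
      exact hFle x
end

section
/- For all ψ ∈ C(ℤₚ, ℂₚ): S(ψ) = (𝟙 − β₁) ⋆ ψ and S⁻¹(ψ) = q ⋆ ψ, where q = Σₙ n!·βₙ; consequently q ⋆ (𝟙 − β₁) = 𝟙, i.e., q is the ⋆-inverse of 𝟙 − β₁. -/
/-!
The identity `x·β_n(x - 1) = (n + 1)·β_{n+1}(x)` shows that `S` sends the Mahler coefficients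
`(c_n)` to `(c_n - n·c_{n-1})`, which is the convolution with `𝟙 - β₁`. This triangular
recursion is solved by convolution with `(n!)`, because `n! - n·(n - 1)! = 0` for `n ≥ 1`.
For `S f = ψ` with `f` continuous, Mahler's theorem expands `f`, and uniqueness of Mahler
coefficients identifies `S f`'s coefficients with those of `ψ`.
-/

open Filter Finset

/-- Binomial convolution of Mahler coefficient sequences:
`(a ⋆ b)ₙ = Σ_{k=0}^n C(n,k) aₖ bₙ₋ₖ`. -/
def conv (K : Type*) [NontriviallyNormedField K] (a b : ℕ → K) (n : ℕ) : K :=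
  ∑ k ∈ Finset.range (n + 1), (n.choose k : K) * a k * b (n - k)

/-- The Mahler coefficient sequence of `𝟙 - β₁`: `(1, -1, 0, 0, …)`. -/
def uCoeff (K : Type*) [NontriviallyNormedField K] (n : ℕ) : K :=
  if n = 0 then 1 else if n = 1 then -1 else 0

open PadicInt
open scoped Topology fwdDiff

section Convolution

variable {K : Type*} [NontriviallyNormedField K]

lemma conv_comm (a b : ℕ → K) : conv K a b = conv K b a := by
  funext n
  rw [conv, ← sum_range_reflect]
  refine sum_congr rfl fun k hk => ?_
  have hkn : k ≤ n := Nat.lt_succ_iff.mp (mem_range.mp hk)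
  rw [show n + 1 - 1 - k = n - k by omega, Nat.choose_symm hkn, Nat.sub_sub_self hkn]
  ring

-- At `n = 0` the truncated `n - 1` is harmless: it is multiplied by `n`.
lemma conv_uCoeff_apply (c : ℕ → K) (n : ℕ) :
    conv K (uCoeff K) c n = c n - n * c (n - 1) := by
  rcases n with _ | n
  · simp [conv, uCoeff]
  · rw [conv, sum_range_succ', sum_range_succ', sum_eq_zero fun k _ => by simp [uCoeff]]
    simp [uCoeff]
    ring

lemma conv_factorial_apply (c : ℕ → K) (n : ℕ) :
    conv K (fun m => (m.factorial : K)) c n =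
      ∑ k ∈ range (n + 1), (n.descFactorial k : K) * c (n - k) := by
  refine sum_congr rfl fun k _ => ?_
  rw [Nat.descFactorial_eq_factorial_mul_choose]
  push_cast
  ring

lemma conv_factorial_succ (c : ℕ → K) (n : ℕ) :
    conv K (fun m => (m.factorial : K)) c (n + 1) =
      (n + 1) * conv K (fun m => (m.factorial : K)) c n + c (n + 1) := by
  simp only [conv_factorial_apply, sum_range_succ' _ (n + 1), Nat.succ_descFactorial_succ,
    Nat.descFactorial_zero, mul_sum]
  push_cast
  simp only [one_mul, mul_assoc]

lemma conv_factorial_uCoeff :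
    conv K (fun m => (m.factorial : K)) (uCoeff K) = fun n => if n = 0 then 1 else 0 := by
  funext n
  rw [conv_comm, conv_uCoeff_apply]
  rcases n with _ | n
  · simp
  · simp [Nat.factorial_succ]

lemma eq_conv_factorial_of_conv_uCoeff_eq {a b : ℕ → K} (h : conv K (uCoeff K) a = b) :
    a = conv K (fun m => (m.factorial : K)) b := by
  funext n
  induction n with
  | zero => simpa [conv, uCoeff] using congrFun h 0
  | succ n ih =>
    have hb := congrFun h (n + 1)
    rw [conv_uCoeff_apply] at hb
    rw [conv_factorial_succ, ← ih, ← hb]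
    push_cast
    ring

end Convolution

lemma tendsto_natCast_mul_sub_one {R : Type*} [SeminormedRing R] [NormOneClass R]
    [IsUltrametricDist R] {c : ℕ → R} (hc : Tendsto c atTop (𝓝 0)) :
    Tendsto (fun n : ℕ => (n : R) * c (n - 1)) atTop (𝓝 0) := by
  refine squeeze_zero_norm (fun n => ?_)
    (tendsto_norm_zero.comp (hc.comp (tendsto_sub_atTop_nat 1)))
  exact (norm_mul_le _ _).trans
    (mul_le_of_le_one_left (norm_nonneg _) (IsUltrametricDist.norm_natCast_le_one R n))

lemma tendsto_conv_uCoeff {K : Type*} [NontriviallyNormedField K] [IsUltrametricDist K]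
    {c : ℕ → K} (hc : Tendsto c atTop (𝓝 0)) : Tendsto (conv K (uCoeff K) c) atTop (𝓝 0) := by
  simpa [funext (conv_uCoeff_apply c)] using hc.sub (tendsto_natCast_mul_sub_one hc)

section MahlerExpansion

variable (p : ℕ) [Fact p.Prime] (K : Type*) [NontriviallyNormedField K] [NormedAlgebra ℚ_[p] K]

@[simp]
lemma pc_natCast (m : ℕ) : pc p K m = m := by
  simp [pc]

@[simp]
lemma pc_sub_one (x : ℤ_[p]) : pc p K (x - 1) = pc p K x - 1 := by
  simp [pc]

lemma continuous_pc : Continuous (pc p K) :=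
  (algebraMapCLM ℚ_[p] K).continuous.comp continuous_subtype_val

lemma continuous_bK (n : ℕ) : Continuous (bK p K n) :=
  (continuous_finsetProd _ fun _ _ => (continuous_pc p K).sub continuous_const).div_const _

lemma bK_natCast (n m : ℕ) : bK p K n m = m.choose n := by
  have : CharZero K := charZero_of_injective_algebraMap (algebraMap ℚ_[p] K).injective
  rw [bK, pc_natCast, ← descPochhammer_eval_eq_prod_range, descPochhammer_eval_eq_descFactorial,
    Nat.descFactorial_eq_factorial_mul_choose, Nat.cast_mul,
    mul_div_cancel_left₀ _ (Nat.cast_ne_zero.mpr n.factorial_ne_zero)]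

lemma pc_mul_bK_sub_one (n : ℕ) (x : ℤ_[p]) :
    pc p K x * bK p K n (x - 1) = (n + 1) * bK p K (n + 1) x := by
  have : CharZero K := charZero_of_injective_algebraMap (algebraMap ℚ_[p] K).injective
  have hn : (n.factorial : K) ≠ 0 := Nat.cast_ne_zero.mpr n.factorial_ne_zero
  rw [bK, bK, prod_range_succ', Nat.factorial_succ, pc_sub_one]
  push_cast
  field_simp
  simp only [sub_sub, add_comm (1 : K), sub_zero, mul_comm]

noncomputable instance : Algebra ℤ_[p] K :=
  ((algebraMap ℚ_[p] K).comp PadicInt.Coe.ringHom).toAlgebra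

lemma norm_algebraMap_padicInt (x : ℤ_[p]) : ‖algebraMap ℤ_[p] K x‖ = ‖x‖ :=
  (norm_algebraMap' K (x : ℚ_[p])).trans (PadicInt.norm_def).symm

instance : IsBoundedSMul ℤ_[p] K :=
  IsBoundedSMul.of_norm_smul_le fun r x => by
    rw [Algebra.smul_def, norm_mul, norm_algebraMap_padicInt]

lemma bK_eq_algebraMap_mahler (n : ℕ) (x : ℤ_[p]) :
    bK p K n x = algebraMap ℤ_[p] K (mahler n x) :=
  have hmahler : Continuous fun y => algebraMap ℤ_[p] K (mahler n y) :=
    (continuous_pc p K).comp (mahler n).continuous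
  congrFun (denseRange_natCast.equalizer (continuous_bK p K n) hmahler (funext fun m => by
    simp [bK_natCast, mahler_natCast_eq])) x

lemma norm_bK_le_one (n : ℕ) (x : ℤ_[p]) : ‖bK p K n x‖ ≤ 1 := by
  rw [bK_eq_algebraMap_mahler, norm_algebraMap_padicInt]
  exact norm_le_one _

variable [CompleteSpace K]

lemma tsum_mul_bK_eq_mahlerSeries {c : ℕ → K} (hc : Tendsto c atTop (𝓝 0)) (x : ℤ_[p]) :
    ∑' n, c n * bK p K n x = mahlerSeries c x := by
  have := IsUltrametricDist.of_normedAlgebra ℚ_[p] (L := K)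
  rw [mahlerSeries_apply hc]
  exact tsum_congr fun n => by rw [bK_eq_algebraMap_mahler, Algebra.smul_def, mul_comm]

lemma summable_mul_bK {c : ℕ → K} (hc : Tendsto c atTop (𝓝 0)) (x : ℤ_[p]) :
    Summable fun n => c n * bK p K n x := by
  have := IsUltrametricDist.of_normedAlgebra ℚ_[p] (L := K)
  refine NonarchimedeanAddGroup.summable_of_tendsto_cofinite_zero ?_
  rw [Nat.cofinite_eq_atTop]
  refine squeeze_zero_norm (fun n => ?_) (tendsto_zero_iff_norm_tendsto_zero.mp hc)
  rw [norm_mul]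
  exact mul_le_of_le_one_right (norm_nonneg _) (norm_bK_le_one p K n x)

lemma eq_of_tsum_mul_bK_eq {c d : ℕ → K} (hc : Tendsto c atTop (𝓝 0))
    (hd : Tendsto d atTop (𝓝 0)) (h : ∀ x, ∑' n, c n * bK p K n x = ∑' n, d n * bK p K n x) :
    c = d := by
  have := IsUltrametricDist.of_normedAlgebra ℚ_[p] (L := K)
  have hcd : (mahlerSeries c : C(ℤ_[p], K)) = mahlerSeries d := by
    ext x
    rw [← tsum_mul_bK_eq_mahlerSeries p K hc, ← tsum_mul_bK_eq_mahlerSeries p K hd, h]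
  funext n
  rw [← fwdDiff_mahlerSeries (p := p) hc n, ← fwdDiff_mahlerSeries (p := p) hd n, hcd]

lemma exists_mahler_expansion {f : ℤ_[p] → K} (hf : Continuous f) :
    ∃ a : ℕ → K, Tendsto a atTop (𝓝 0) ∧ ∀ x, f x = ∑' n, a n * bK p K n x := by
  have := IsUltrametricDist.of_normedAlgebra ℚ_[p] (L := K)
  let F : C(ℤ_[p], K) := ⟨f, hf⟩
  have ha := fwdDiff_tendsto_zero F
  refine ⟨_, ha, fun x => ?_⟩
  have hF : (mahlerSeries _ : C(ℤ_[p], K)) = F := (hasSum_mahler F).tsum_eq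
  rw [tsum_mul_bK_eq_mahlerSeries p K ha, hF]
  rfl

end MahlerExpansion

section OperatorS

variable {p : ℕ} [Fact p.Prime] {K : Type*} [NontriviallyNormedField K] [NormedAlgebra ℚ_[p] K]
  [CompleteSpace K]

lemma Sop_eq_tsum_conv_uCoeff {c : ℕ → K} (hc : Tendsto c atTop (𝓝 0)) {g : ℤ_[p] → K}
    (hg : ∀ x, g x = ∑' n, c n * bK p K n x) (x : ℤ_[p]) :
    Sop p K g x = ∑' n, conv K (uCoeff K) c n * bK p K n x := by
  have := IsUltrametricDist.of_normedAlgebra ℚ_[p] (L := K)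
  have hd := tendsto_natCast_mul_sub_one hc
  have hshift : pc p K x * g (x - 1) = ∑' n : ℕ, (n : K) * c (n - 1) * bK p K n x := by
    rw [(summable_mul_bK p K hd x).tsum_eq_zero_add, hg, ← tsum_mul_left]
    simp only [Nat.cast_zero, zero_mul, zero_add, Nat.add_sub_cancel, Nat.cast_succ]
    exact tsum_congr fun n => by rw [mul_left_comm, pc_mul_bK_sub_one]; ring
  rw [Sop, hshift, hg, ← (summable_mul_bK p K hc x).tsum_sub (summable_mul_bK p K hd x)]
  exact tsum_congr fun n => by rw [conv_uCoeff_apply, sub_mul]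

end OperatorS

theorem stmt_18_general (p : ℕ) [Fact p.Prime] (K : Type*) [NontriviallyNormedField K]
    [NormedAlgebra ℚ_[p] K] [CompleteSpace K]
    (ψ : ℤ_[p] → K)
    (b : ℕ → K) (hb : Tendsto b atTop (nhds 0))
    (hψm : ∀ x, ψ x = ∑' n : ℕ, b n * bK p K n x) :
    (∀ x, Sop p K ψ x = ∑' n : ℕ, conv K (uCoeff K) b n * bK p K n x) ∧
    (∀ f : ℤ_[p] → K, Continuous f → Sop p K f = ψ →
      ∀ x, f x = ∑' n : ℕ, conv K (fun m => (m.factorial : K)) b n * bK p K n x) ∧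
    conv K (fun m => (m.factorial : K)) (uCoeff K)
      = fun n => if n = 0 then 1 else 0 := by
  refine ⟨Sop_eq_tsum_conv_uCoeff hb hψm, fun f hf hSf x => ?_, conv_factorial_uCoeff⟩
  have := IsUltrametricDist.of_normedAlgebra ℚ_[p] (L := K)
  obtain ⟨a, ha, hfa⟩ := exists_mahler_expansion p K hf
  have hSa : conv K (uCoeff K) a = b :=
    eq_of_tsum_mul_bK_eq p K (tendsto_conv_uCoeff ha) hb fun y => by
      rw [← Sop_eq_tsum_conv_uCoeff ha hfa, hSf, hψm]
  rw [hfa, ← eq_conv_factorial_of_conv_uCoeff_eq hSa]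

/-- For all continuous `ψ : ℤ_[p] → K` with Mahler coefficients
`b`: `S ψ = (𝟙 - β₁) ⋆ ψ` and `S⁻¹ ψ = q ⋆ ψ`, where `q = Σₙ n!·βₙ` has Mahler
coefficients `(n!)ₙ`; consequently `q ⋆ (𝟙 - β₁) = 𝟙` (on Mahler coefficients),
i.e. `q` is the `⋆`-inverse of `𝟙 - β₁`. -/
theorem stmt_18 (p : ℕ) [Fact p.Prime] (K : Type*) [NontriviallyNormedField K]
    [NormedAlgebra ℚ_[p] K] [CompleteSpace K]
    (ψ : ℤ_[p] → K) (hψ : Continuous ψ)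
    (b : ℕ → K) (hb : Tendsto b atTop (nhds 0))
    (hψm : ∀ x, ψ x = ∑' n : ℕ, b n * bK p K n x) :
    (∀ x, Sop p K ψ x = ∑' n : ℕ, conv K (uCoeff K) b n * bK p K n x) ∧
    (∀ f : ℤ_[p] → K, Continuous f → Sop p K f = ψ →
      ∀ x, f x = ∑' n : ℕ, conv K (fun m => (m.factorial : K)) b n * bK p K n x) ∧
    conv K (fun m => (m.factorial : K)) (uCoeff K)
      = fun n => if n = 0 then 1 else 0 :=
  stmt_18_general p K ψ b hb hψm
end
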